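/- Let H be an ℓ-bounded set system with VC-dimension at most 1. If |H| > (r-1)^ℓ, then H contains an r-sunflower. -/

import Mathlib

/-- A family of `r` distinct sets is an `r`-sunflower if all pairwise
intersections of distinct members coincide. -/
def IsSunflower {α : Type*} [DecidableEq α] (r : ℕ) (P : Finset (Finset α)) : Prop :=
  P.card = r ∧ ∀ A ∈ P, ∀ B ∈ P, ∀ A' ∈ P, ∀ B' ∈ P,
    A ≠ B → A' ≠ B' → A ∩ B = A' ∩ B'

/-- `H` contains an `r`-sunflower. -/
def HasSunflower {α : Type*} [DecidableEq α] (H : Finset (Finset α)) (r : ℕ) : Prop :=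
  ∃ P ⊆ H, IsSunflower r P

/-- `H` shatters `T` if every subset of `T` is the trace of a member of `H`. -/
def Shatters {α : Type*} [DecidableEq α] (H : Finset (Finset α)) (T : Finset α) : Prop :=
  ∀ A ⊆ T, ∃ S ∈ H, T ∩ S = A

/-- The VC-dimension of `H` is at most `d`: every shattered set has size at most `d`. -/
def VCdimLE {α : Type*} [DecidableEq α] (H : Finset (Finset α)) (d : ℕ) : Prop :=
  ∀ T : Finset α, Shatters H T → T.card ≤ d

/-
Induct on `ℓ`, with `r = q + 1 ≥ 3` (for `r ≤ 2` any `r` members form a sunflower).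
If some point `x` lies in more than `q ^ (ℓ - 1)` members, the link of `x` satisfies the
hypotheses for `ℓ - 1`, and a sunflower in it lifts back by re-inserting `x`. Otherwise take a
maximal pairwise disjoint subfamily `D`: it has at most `q` members, and every member of `H` is in
`D` or meets a member of `D`. For nonempty `A ∈ H`, VC-dimension `1` gives either a point common
to all members meeting `A`, or two points `y, z` such that every member contains `y` or `z`
(otherwise `{y, z}` would be shattered). Either way `H` is covered by at most `q` stars, each of
size at most `q ^ (ℓ - 1)`, so `|H| ≤ q ^ ℓ`.
-/

open Finset

section

variable {α : Type*} [DecidableEq α] {H : Finset (Finset α)}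

lemma isSunflower_of_card_le_two {P : Finset (Finset α)} {r : ℕ} (hP : P.card = r)
    (hr : r ≤ 2) : IsSunflower r P := by
  refine ⟨hP, fun A hA B hB A' hA' B' hB' hAB hA'B' => ?_⟩
  have hPAB : P = {A, B} :=
    (eq_of_subset_of_card_le (insert_subset hA (singleton_subset_iff.2 hB))
      (by rw [card_pair hAB]; omega)).symm
  rw [hPAB] at hA' hB'
  simp only [mem_insert, mem_singleton] at hA' hB'
  rcases hA' with rfl | rfl <;> rcases hB' with rfl | rfl <;>
    first | exact absurd rfl hA'B' | rfl | exact inter_comm _ _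

lemma hasSunflower_of_le_two {r : ℕ} (hr : r ≤ 2) (hH : r ≤ H.card) : HasSunflower H r :=
  let ⟨P, hPH, hP⟩ := exists_subset_card_eq hH
  ⟨P, hPH, isSunflower_of_card_le_two hP hr⟩

lemma hasSunflower_of_pairwiseDisjoint {D : Finset (Finset α)} {r : ℕ} (hDH : D ⊆ H)
    (hD : (D : Set (Finset α)).PairwiseDisjoint id) (hr : r ≤ D.card) : HasSunflower H r := by
  obtain ⟨P, hPD, hP⟩ := exists_subset_card_eq hr
  have hempty : ∀ A ∈ P, ∀ B ∈ P, A ≠ B → A ∩ B = ∅ := fun A hA B hB hAB =>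
    disjoint_iff_inter_eq_empty.1 (hD (hPD hA) (hPD hB) hAB)
  refine ⟨P, hPD.trans hDH, hP, fun A hA B hB A' hA' B' hB' hAB hA'B' => ?_⟩
  rw [hempty A hA B hB hAB, hempty A' hA' B' hB' hA'B']

lemma IsSunflower.image_insert {P : Finset (Finset α)} {r : ℕ} {x : α} (hP : IsSunflower r P)
    (hx : ∀ A ∈ P, x ∉ A) : IsSunflower r (P.image (insert x)) := by
  obtain ⟨hcard, hinter⟩ := hP
  refine ⟨?_, ?_⟩
  · rw [card_image_of_injOn fun A hA B hB hAB => ?_, hcard]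
    rw [← erase_insert (hx A hA), ← erase_insert (hx B hB)]
    exact congrArg (erase · x) hAB
  · simp only [mem_image]
    rintro _ ⟨A, hA, rfl⟩ _ ⟨B, hB, rfl⟩ _ ⟨A', hA', rfl⟩ _ ⟨B', hB', rfl⟩ hAB hA'B'
    rw [← insert_inter_distrib, ← insert_inter_distrib,
      hinter A hA B hB A' hA' B' hB' (ne_of_apply_ne _ hAB) (ne_of_apply_ne _ hA'B')]

def Finset.link (H : Finset (Finset α)) (x : α) : Finset (Finset α) :=
  (H.filter (x ∈ ·)).image (erase · x)

lemma Finset.mem_link {x : α} {T : Finset α} : T ∈ H.link x ↔ ∃ S ∈ H, x ∈ S ∧ S.erase x = T := by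
  simp [Finset.link, and_assoc]

lemma Finset.card_link (x : α) : (H.link x).card = (H.filter (x ∈ ·)).card :=
  card_image_of_injOn fun S hS S' hS' h => by
    rw [← insert_erase (mem_filter.1 hS).2, ← insert_erase (mem_filter.1 hS').2]
    exact congrArg (insert x) h

lemma Finset.notMem_of_mem_link {x : α} {T : Finset α} (hT : T ∈ H.link x) : x ∉ T := by
  obtain ⟨S, -, -, rfl⟩ := mem_link.1 hT
  exact notMem_erase x S

lemma Finset.card_le_of_mem_link {x : α} {ℓ : ℕ} (hb : ∀ S ∈ H, S.card ≤ ℓ + 1) {T : Finset α}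
    (hT : T ∈ H.link x) : T.card ≤ ℓ := by
  obtain ⟨S, hS, hxS, rfl⟩ := mem_link.1 hT
  have := hb S hS
  rw [card_erase_of_mem hxS]
  omega

lemma VCdimLE.link {d : ℕ} (hVC : VCdimLE H d) (x : α) : VCdimLE (H.link x) d := by
  intro T hT
  have hxT : x ∉ T := fun hx => by
    obtain ⟨S, hS, hTS⟩ := hT T Subset.rfl
    exact notMem_of_mem_link hS (mem_of_mem_inter_right (hTS.symm ▸ hx))
  refine hVC T fun B hB => ?_
  obtain ⟨S', hS', rfl⟩ := hT B hB
  obtain ⟨S, hS, -, rfl⟩ := mem_link.1 hS'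
  exact ⟨S, hS, by rw [← erase_inter_comm, erase_eq_of_notMem hxT]⟩

lemma HasSunflower.of_link {x : α} {r : ℕ} (h : HasSunflower (H.link x) r) :
    HasSunflower H r := by
  obtain ⟨P, hPL, hP⟩ := h
  refine ⟨P.image (insert x), fun S hS => ?_,
    hP.image_insert fun A hA => notMem_of_mem_link (hPL hA)⟩
  obtain ⟨A, hA, rfl⟩ := mem_image.1 hS
  obtain ⟨S, hS, hxS, rfl⟩ := mem_link.1 (hPL hA)
  rwa [insert_erase hxS]

lemma VCdimLE.mem_or_mem (hVC : VCdimLE H 1) {y z : α} {S S' T : Finset α} (hS : S ∈ H)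
    (hS' : S' ∈ H) (hT : T ∈ H) (hyS : y ∈ S) (hzS : z ∉ S) (hyS' : y ∉ S') (hzS' : z ∈ S')
    (hyT : y ∈ T) (hzT : z ∈ T) : ∀ W ∈ H, y ∈ W ∨ z ∈ W := by
  by_contra! ⟨W, hW, hyW, hzW⟩
  have hyz : y ≠ z := by rintro rfl; exact hzS hyS
  have htrace : ∀ A ⊆ ({y, z} : Finset α), ∀ U : Finset α,
      (y ∈ U ↔ y ∈ A) → (z ∈ U ↔ z ∈ A) → {y, z} ∩ U = A := by
    intro A hA U hy hz
    ext a
    have := @hA a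
    simp only [mem_inter, mem_insert, mem_singleton] at this ⊢
    grind
  have := hVC {y, z} fun A hA => by
    by_cases hy : y ∈ A <;> by_cases hz : z ∈ A
    exacts [⟨T, hT, htrace A hA T (by simp [*]) (by simp [*])⟩,
      ⟨S, hS, htrace A hA S (by simp [*]) (by simp [*])⟩,
      ⟨S', hS', htrace A hA S' (by simp [*]) (by simp [*])⟩,
      ⟨W, hW, htrace A hA W (by simp [*]) (by simp [*])⟩]
  rw [card_pair hyz] at this
  omega

lemma VCdimLE.exists_common_or_pair (hVC : VCdimLE H 1) {A : Finset α} (hA : A ∈ H)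
    (hAne : A.Nonempty) :
    (∃ x, ∀ S ∈ H, ¬Disjoint S A → x ∈ S) ∨ ∃ y z, ∀ S ∈ H, y ∈ S ∨ z ∈ S := by
  obtain ⟨S₀, hS₀, hmin⟩ := (H.filter (¬Disjoint · A)).exists_min_image (fun S => (S ∩ A).card)
    ⟨A, mem_filter.2 ⟨hA, by simpa using hAne.ne_empty⟩⟩
  rw [mem_filter, not_disjoint_iff_nonempty_inter] at hS₀
  obtain ⟨hS₀H, x, hx⟩ := hS₀
  rw [mem_inter] at hx
  by_cases hcommon : ∀ S ∈ H, ¬Disjoint S A → x ∈ S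
  · exact .inl ⟨x, hcommon⟩
  push Not at hcommon
  obtain ⟨S, hS, hSA, hxS⟩ := hcommon
  -- `S ∩ A ⊆ S₀ ∩ A` would force equality by the minimality of `S₀`, putting `x` in `S`
  obtain ⟨z, hz, hzS₀⟩ : ∃ z ∈ S ∩ A, z ∉ S₀ ∩ A := by
    by_contra! hsub
    have := eq_of_subset_of_card_le hsub (hmin S (mem_filter.2 ⟨hS, hSA⟩))
    exact hxS (mem_of_mem_inter_left (this ▸ mem_inter.2 hx))
  rw [mem_inter] at hz
  exact .inr ⟨x, z, hVC.mem_or_mem hS₀H hS hA hx.1 (fun h => hzS₀ (mem_inter.2 ⟨h, hz.2⟩))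
    hxS hz.1 hx.2 hz.2⟩

lemma exists_maximal_pairwiseDisjoint (H : Finset (Finset α)) :
    ∃ D ⊆ H, (D : Set (Finset α)).PairwiseDisjoint id ∧
      ∀ S ∈ H, S ∉ D → ∃ A ∈ D, ¬Disjoint S A := by
  classical
  obtain ⟨D, hD, hmax⟩ := (H.powerset.filter fun D : Finset (Finset α) =>
    (D : Set (Finset α)).PairwiseDisjoint id).exists_max_image card ⟨∅, by simp⟩
  rw [mem_filter, mem_powerset] at hD
  refine ⟨D, hD.1, hD.2, fun S hS hSD => ?_⟩
  by_contra! hdisj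
  have := hmax (insert S D) (mem_filter.2 ⟨mem_powerset.2 (insert_subset hS hD.1),
    by rw [coe_insert]; exact hD.2.insert fun A hA _ => hdisj A hA⟩)
  rw [card_insert_of_notMem hSD] at this
  omega

lemma card_le_mul_of_forall_card_filter_le (hVC : VCdimLE H 1) {q m : ℕ} (hq : 2 ≤ q)
    (hm : 1 ≤ m) (hdeg : ∀ x, (H.filter (x ∈ ·)).card ≤ m) (hno : ¬HasSunflower H (q + 1)) :
    H.card ≤ q * m := by
  obtain ⟨D, hDH, hD, hmax⟩ := exists_maximal_pairwiseDisjoint H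
  have hDq : D.card ≤ q := by
    by_contra! h
    exact hno (hasSunflower_of_pairwiseDisjoint hDH hD h)
  by_cases hpair : ∃ y z, ∀ S ∈ H, y ∈ S ∨ z ∈ S
  · obtain ⟨y, z, hyz⟩ := hpair
    calc H.card ≤ (({y, z} : Finset α).biUnion fun x => H.filter (x ∈ ·)).card :=
          card_le_card fun S hS => by simpa [hS] using hyz S hS
      _ ≤ ({y, z} : Finset α).card * m := card_biUnion_le_card_mul _ _ _ fun x _ => hdeg x
      _ ≤ q * m := Nat.mul_le_mul_right m (card_le_two.trans hq)
  have hcluster : ∀ A ∈ D, (H.filter fun S => S = A ∨ ¬Disjoint S A).card ≤ m := by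
    intro A hA
    rcases A.eq_empty_or_nonempty with rfl | hAne
    · calc _ ≤ ({∅} : Finset (Finset α)).card := card_le_card fun S hS => by simp_all
        _ ≤ m := hm
    obtain ⟨x, hx⟩ := (hVC.exists_common_or_pair (hDH hA) hAne).resolve_right hpair
    refine (card_le_card fun S hS => ?_).trans (hdeg x)
    obtain ⟨hSH, rfl | hSA⟩ := mem_filter.1 hS
    · exact mem_filter.2 ⟨hSH, hx S hSH (by simpa using hAne.ne_empty)⟩
    · exact mem_filter.2 ⟨hSH, hx S hSH hSA⟩
  calc H.card ≤ (D.biUnion fun A => H.filter fun S => S = A ∨ ¬Disjoint S A).card :=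
        card_le_card fun S hS => by
          by_cases hSD : S ∈ D
          · exact mem_biUnion.2 ⟨S, hSD, mem_filter.2 ⟨hS, .inl rfl⟩⟩
          · obtain ⟨A, hA, hSA⟩ := hmax S hS hSD
            exact mem_biUnion.2 ⟨A, hA, mem_filter.2 ⟨hS, .inr hSA⟩⟩
    _ ≤ D.card * m := card_biUnion_le_card_mul _ _ _ hcluster
    _ ≤ q * m := Nat.mul_le_mul_right m hDq

theorem hasSunflower_of_pow_lt_card {q : ℕ} (hq : 2 ≤ q) :
    ∀ {ℓ : ℕ} {H : Finset (Finset α)}, (∀ S ∈ H, S.card ≤ ℓ) → VCdimLE H 1 →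
      q ^ ℓ < H.card → HasSunflower H (q + 1)
  | 0, H, hb, _, hcard => by
    have : H.card ≤ 1 := card_le_one.2 fun S hS T hT => by
      rw [card_eq_zero.1 (Nat.le_zero.1 (hb S hS)), card_eq_zero.1 (Nat.le_zero.1 (hb T hT))]
    rw [pow_zero] at hcard
    omega
  | ℓ + 1, H, hb, hVC, hcard => by
    by_cases hx : ∃ x, q ^ ℓ < (H.filter (x ∈ ·)).card
    · obtain ⟨x, hx⟩ := hx
      exact HasSunflower.of_link (hasSunflower_of_pow_lt_card hq
        (fun T hT => card_le_of_mem_link hb hT) (hVC.link x) (by rwa [card_link]))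
    push Not at hx
    by_contra hno
    have := card_le_mul_of_forall_card_filter_le hVC hq (Nat.one_le_pow _ _ (by omega)) hx hno
    rw [pow_succ'] at hcard
    omega

end

/-- An `ℓ`-bounded set system of VC-dimension at most 1 with more than `(r-1)^ℓ`
members contains an `r`-sunflower. -/
theorem stmt3 {α : Type*} [DecidableEq α] (H : Finset (Finset α)) (ℓ r : ℕ)
    (hb : ∀ S ∈ H, S.card ≤ ℓ) (hVC : VCdimLE H 1)
    (hcard : (r - 1) ^ ℓ < H.card) :
    HasSunflower H r := by
  rcases le_or_gt r 2 with hr | hr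
  · have : r - 1 ≤ (r - 1) ^ ℓ := by interval_cases r <;> simp
    exact hasSunflower_of_le_two hr (by omega)
  · obtain ⟨q, rfl⟩ : ∃ q, r = q + 1 := ⟨r - 1, by omega⟩
    exact hasSunflower_of_pow_lt_card (by omega) hb hVC (by simpa using hcard)
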